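/- arXiv:1702.00342 — 5 statements merged into one kernel-verified Lean document; each statement's English description precedes it below -/
import Mathlib

section
/- Let K be a compact Hausdorff topological group with Haar measure μ, let Ω ⊆ K be an open symmetric (Ω = Ω⁻¹) neighborhood of the identity, and let A ≤ K be a subgroup. Let B ≤ A be the subgroup generated by A ∩ Ω·Ω. Then distinct left B-cosets in A have representatives a, a' for which the translates a·Ω and a'·Ω are disjoint; consequently the index of B in A is at most μ(K)/μ(Ω). In particular, [A : B] is finite and bounded by μ(K)/μ(Ω). -/
open scoped Pointwise ENNReal
open MeasureTheory Function

/-!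
If `a • Ω` and `a' • Ω` meet, then `a⁻¹ * a' ∈ Ω * Ω⁻¹ = Ω * Ω`, so for `a, a' ∈ A` it lies in
`A ∩ Ω * Ω ⊆ B`. Hence translates of `Ω` by representatives of distinct cosets of `B` in `A` are
pairwise disjoint, all of measure `μ Ω > 0`, so at most `μ univ / μ Ω < ∞` of them fit into `K`.
-/

theorem Set.disjoint_smul_smul_of_inv_mul_notMem_mul {K : Type*} [Group K] {Ω : Set K}
    (hΩ : Ω⁻¹ = Ω) {a a' : K} (h : a⁻¹ * a' ∉ Ω * Ω) : Disjoint (a • Ω) (a' • Ω) := by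
  rw [Set.disjoint_left]
  rintro _ ⟨ω, hω, rfl⟩ ⟨ω', hω', hωω'⟩
  refine h ⟨ω, hω, ω'⁻¹, by rwa [← hΩ, Set.inv_mem_inv], ?_⟩
  simp only [smul_eq_mul] at hωω'
  rw [eq_inv_mul_iff_mul_eq, ← mul_assoc, ← hωω', mul_inv_cancel_right]

theorem Subgroup.pairwise_disjoint_smul_quotient_out {K : Type*} [Group K] {Ω : Set K}
    {A B : Subgroup K} (h : ∀ a ∈ A, ∀ a' ∈ A, a⁻¹ * a' ∉ B → Disjoint (a • Ω) (a' • Ω)) :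
    Pairwise (Disjoint on fun q : A ⧸ B.subgroupOf A ↦ (q.out : K) • Ω) := by
  intro q q' hqq'
  refine h _ q.out.2 _ q'.out.2 fun hmem ↦ hqq' ?_
  rw [← QuotientGroup.out_eq' q, ← QuotientGroup.out_eq' q']
  exact QuotientGroup.eq.mpr hmem

theorem MeasureTheory.enatCard_mul_le_measure_univ {α ι : Type*} [MeasurableSpace α]
    (μ : Measure α) {s : ι → Set α} {c : ℝ≥0∞} (hs : ∀ i, NullMeasurableSet (s i) μ)
    (hd : Pairwise (Disjoint on s)) (hc : ∀ i, μ (s i) = c) :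
    ENat.card ι * c ≤ μ Set.univ :=
  calc ENat.card ι * c = ∑' i, μ (s i) := by simp [hc]
    _ ≤ μ (⋃ i, s i) := tsum_meas_le_meas_iUnion_of_disjoint₀ μ hs fun _ _ h ↦ (hd h).aedisjoint
    _ ≤ μ Set.univ := measure_mono (Set.subset_univ _)

theorem ENat.finite_and_natCard_le_div_of_card_mul_le {ι : Type*} {m M : ℝ≥0∞} (hm : m ≠ 0)
    (hM : M ≠ ⊤) (h : ENat.card ι * m ≤ M) : Finite ι ∧ (Nat.card ι : ℝ≥0∞) ≤ M / m := by
  have : Finite ι := by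
    refine ENat.card_lt_top.mp (lt_top_iff_ne_top.mpr fun htop ↦ hM ?_)
    simpa [htop, ENNReal.top_mul hm] using h
  refine ⟨this, (ENNReal.le_div_iff_mul_le (Or.inl hm) (Or.inr hM)).mpr ?_⟩
  rwa [ENat.card_eq_coe_natCard, ENat.toENNReal_coe] at h

theorem stmt3_general {K : Type*} [Group K] [TopologicalSpace K] [IsTopologicalGroup K]
    [CompactSpace K] [MeasurableSpace K] [BorelSpace K]
    (μ : MeasureTheory.Measure K) [μ.IsHaarMeasure]
    (Ω : Set K) (hΩopen : IsOpen Ω) (hΩone : (1 : K) ∈ Ω) (hΩsymm : Ω⁻¹ = Ω)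
    (A B : Subgroup K) (hB : B = Subgroup.closure ((A : Set K) ∩ (Ω * Ω))) :
    (∀ a ∈ A, ∀ a' ∈ A, a⁻¹ * a' ∉ B → Disjoint (a • Ω) (a' • Ω)) ∧
      B.relIndex A ≠ 0 ∧ (B.relIndex A : ENNReal) ≤ μ Set.univ / μ Ω := by
  have hdisj : ∀ a ∈ A, ∀ a' ∈ A, a⁻¹ * a' ∉ B → Disjoint (a • Ω) (a' • Ω) := by
    intro a ha a' ha' haa'
    refine Set.disjoint_smul_smul_of_inv_mul_notMem_mul hΩsymm fun hΩΩ ↦ haa' ?_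
    exact hB ▸ Subgroup.subset_closure ⟨A.mul_mem (A.inv_mem ha) ha', hΩΩ⟩
  have hpack := enatCard_mul_le_measure_univ μ (fun _ ↦ (hΩopen.smul _).nullMeasurableSet)
    (Subgroup.pairwise_disjoint_smul_quotient_out hdisj) fun _ ↦ measure_smul μ _ Ω
  obtain ⟨hfin, hle⟩ := ENat.finite_and_natCard_le_div_of_card_mul_le
    (hΩopen.measure_ne_zero μ ⟨1, hΩone⟩) (measure_ne_top μ _) hpack
  exact ⟨hdisj, Subgroup.index_ne_zero_iff_finite.mpr hfin, hle⟩

/-- Let `K` be a compact Hausdorff topological group with Haar measure `μ`, let `Ω` be an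
open symmetric neighborhood of the identity, `A ≤ K` a subgroup, and `B` the subgroup
generated by `A ∩ Ω·Ω`. Then any representatives `a, a'` of distinct left `B`-cosets in `A`
have disjoint translates `a·Ω` and `a'·Ω`; consequently the index `[A : B]` is finite and
at most `μ(K)/μ(Ω)`. -/
theorem stmt3 {K : Type*} [Group K] [TopologicalSpace K] [IsTopologicalGroup K]
    [CompactSpace K] [T2Space K] [MeasurableSpace K] [BorelSpace K]
    (μ : MeasureTheory.Measure K) [μ.IsHaarMeasure]
    (Ω : Set K) (hΩopen : IsOpen Ω) (hΩone : (1 : K) ∈ Ω) (hΩsymm : Ω⁻¹ = Ω)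
    (A B : Subgroup K) (hB : B = Subgroup.closure ((A : Set K) ∩ (Ω * Ω))) :
    (∀ a ∈ A, ∀ a' ∈ A, a⁻¹ * a' ∉ B → Disjoint (a • Ω) (a' • Ω)) ∧
      B.relIndex A ≠ 0 ∧ (B.relIndex A : ENNReal) ≤ μ Set.univ / μ Ω :=
  stmt3_general μ Ω hΩopen hΩone hΩsymm A B hB
end

section
/- Let S be a finite subset of GL_m(ℂ) and let γ belong to the subgroup generated by S. If γ has an eigenvalue λ ∈ ℂ with |λ| > 1, then there exists a constant c > 0 such that for every integer n ≥ 1, whenever γⁿ is written as a product of k elements of S ∪ S⁻¹, one has k ≥ c·n; that is, the word length of γⁿ with respect to S grows at least linearly in n. -/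
/-!
A submultiplicative norm with `‖1‖ = 1` bounds every eigenvalue: `|λ|ⁿ ≤ ‖γⁿ‖`. If `γⁿ` is a
product of `k` elements of `S ∪ S⁻¹`, all of norm at most `M`, then `‖γⁿ‖ ≤ Mᵏ`, so
`|λ|ⁿ ≤ Mᵏ` and `k ≥ (log |λ| / log M) · n`.
-/

open scoped Pointwise NNReal

section NormedRing

variable {A : Type*} [NormedRing A] [NormOneClass A]

theorem List.nnnorm_prod_le_pow_length (l : List A) {M : ℝ≥0} (h : ∀ x ∈ l, ‖x‖₊ ≤ M) :
    ‖l.prod‖₊ ≤ M ^ l.length :=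
  l.nnnorm_prod_le.trans <| by
    simpa using List.prod_le_pow_card (l.map nnnorm) M (by simpa using h)

theorem exists_nnnorm_map_list_prod_le_pow {G : Type*} [Group G] (ρ : G →* A) (S : Finset G) :
    ∃ M : ℝ≥0, 1 < M ∧ ∀ L : List G, (∀ x ∈ L, x ∈ (S : Set G) ∪ (S : Set G)⁻¹) →
      ‖ρ L.prod‖₊ ≤ M ^ L.length := by
  set f : G → ℝ≥0 := fun s => ‖ρ s‖₊ ⊔ ‖ρ s⁻¹‖₊
  refine ⟨2 ⊔ S.sup f, one_lt_two.trans_le le_sup_left, fun L hL => ?_⟩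
  rw [map_list_prod, ← L.length_map ρ]
  refine List.nnnorm_prod_le_pow_length (L.map ρ) ?_
  simp only [List.mem_map]
  rintro _ ⟨x, hx, rfl⟩
  refine le_sup_of_le_right ?_
  rcases hL x hx with hxS | hxS
  · exact le_sup_left.trans (S.le_sup (f := f) hxS)
  · have hx_inv : ‖ρ x⁻¹⁻¹‖₊ ≤ f x⁻¹ := le_sup_right
    rw [inv_inv] at hx_inv
    exact hx_inv.trans (S.le_sup (Set.mem_inv.mp hxS))

theorem nnnorm_pow_le_of_mem_spectrum {𝕜 : Type*} [NormedField 𝕜] [NormedAlgebra 𝕜 A]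
    [CompleteSpace A] {a : A} {k : 𝕜} (hk : k ∈ spectrum 𝕜 a) (n : ℕ) :
    ‖k‖₊ ^ n ≤ ‖a ^ n‖₊ := by
  rw [← NNReal.coe_le_coe, NNReal.coe_pow, coe_nnnorm, coe_nnnorm, ← norm_pow]
  exact spectrum.norm_le_norm_of_mem (spectrum.pow_image_subset a n ⟨k, hk, rfl⟩)

end NormedRing

theorem Real.log_div_log_mul_le_of_pow_le_pow {r M : ℝ} (hr : 0 < r) (hM : 1 < M) {n k : ℕ}
    (h : r ^ n ≤ M ^ k) : Real.log r / Real.log M * n ≤ k := by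
  have hlog := Real.log_le_log (pow_pos hr n) h
  rw [Real.log_pow, Real.log_pow] at hlog
  rw [div_mul_eq_mul_div, div_le_iff₀ (Real.log_pos hM)]
  linarith

theorem Matrix.nonempty_of_mem_spectrum {n R : Type*} [Fintype n] [DecidableEq n] [CommRing R]
    {A : Matrix n n R} {k : R} (hk : k ∈ spectrum R A) : Nonempty n := by
  by_contra h
  rw [not_nonempty_iff] at h
  simp [spectrum.of_subsingleton] at hk

theorem stmt7_general {m : ℕ} (S : Finset (Matrix.GeneralLinearGroup (Fin m) ℂ))
    (γ : Matrix.GeneralLinearGroup (Fin m) ℂ)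
    (lam : ℂ) (hroot : (Matrix.charpoly (↑γ : Matrix (Fin m) (Fin m) ℂ)).IsRoot lam)
    (habs : 1 < ‖lam‖) :
    ∃ c : ℝ, 0 < c ∧ ∀ n : ℕ, 1 ≤ n →
      ∀ L : List (Matrix.GeneralLinearGroup (Fin m) ℂ),
        (∀ x ∈ L, x ∈ (S : Set (Matrix.GeneralLinearGroup (Fin m) ℂ)) ∪
          ((S : Set (Matrix.GeneralLinearGroup (Fin m) ℂ))⁻¹)) →
        L.prod = γ ^ n → c * n ≤ (L.length : ℝ) := by
  let : NormedRing (Matrix (Fin m) (Fin m) ℂ) := Matrix.linftyOpNormedRing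
  let : NormedAlgebra ℂ (Matrix (Fin m) (Fin m) ℂ) := Matrix.linftyOpNormedAlgebra
  have hspec : lam ∈ spectrum ℂ (γ : Matrix (Fin m) (Fin m) ℂ) :=
    Matrix.mem_spectrum_of_isRoot_charpoly hroot
  -- `Nonempty (Fin m)` provides `NormOneClass` for the ℓ∞ operator norm.
  have := Matrix.nonempty_of_mem_spectrum hspec
  have : CompleteSpace (Matrix (Fin m) (Fin m) ℂ) := FiniteDimensional.complete ℂ _
  obtain ⟨M, hM, hword⟩ := exists_nnnorm_map_list_prod_le_pow (Units.coeHom _) S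
  refine ⟨Real.log ‖lam‖ / Real.log M, div_pos (Real.log_pos habs) (Real.log_pos hM), ?_⟩
  intro n _ L hL hprod
  refine Real.log_div_log_mul_le_of_pow_le_pow (one_pos.trans habs) hM ?_
  have hpow : ‖lam‖₊ ^ n ≤ M ^ L.length := by
    refine (nnnorm_pow_le_of_mem_spectrum hspec n).trans ?_
    simpa [hprod] using hword L hL
  exact_mod_cast hpow

/-- If `γ` lies in the group generated by a finite set `S ⊆ GL_m(ℂ)` and `γ` has an
eigenvalue `λ` with `|λ| > 1`, then there exists `c > 0` such that whenever `γⁿ` (with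
`n ≥ 1`) is written as a product of `k` elements of `S ∪ S⁻¹`, one has `k ≥ c·n`;
i.e. the word length of `γⁿ` grows at least linearly in `n`. -/
theorem stmt7 {m : ℕ} (S : Finset (Matrix.GeneralLinearGroup (Fin m) ℂ))
    (γ : Matrix.GeneralLinearGroup (Fin m) ℂ)
    (hγ : γ ∈ Subgroup.closure (S : Set (Matrix.GeneralLinearGroup (Fin m) ℂ)))
    (lam : ℂ) (hroot : (Matrix.charpoly (↑γ : Matrix (Fin m) (Fin m) ℂ)).IsRoot lam)
    (habs : 1 < ‖lam‖) :
    ∃ c : ℝ, 0 < c ∧ ∀ n : ℕ, 1 ≤ n →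
      ∀ L : List (Matrix.GeneralLinearGroup (Fin m) ℂ),
        (∀ x ∈ L, x ∈ (S : Set (Matrix.GeneralLinearGroup (Fin m) ℂ)) ∪
          ((S : Set (Matrix.GeneralLinearGroup (Fin m) ℂ))⁻¹)) →
        L.prod = γ ^ n → c * n ≤ (L.length : ℝ) :=
  stmt7_general S γ lam hroot habs
end

section
/- Let A : [0,1] → GL_m(ℂ) be a continuous map such that for every t ∈ [0,1] every eigenvalue of A(t) is a root of unity, and such that A(0) is unipotent, i.e., (A(0) − 1)^m = 0. Then A(t) is unipotent for every t ∈ [0,1]; in particular A(1) is unipotent. -/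
/-!
The coefficients of the characteristic polynomial of `A t` depend continuously on `t`, while
every root of it is a root of unity. Monic polynomials with roots in the countable set of roots
of unity form a countable set, and a continuous map from the connected interval with countable
range is constant. Hence `A t` has the characteristic polynomial `(X - 1) ^ m` of `A 0`, and
Cayley–Hamilton gives `(A t - 1) ^ m = 0`.
-/

open Polynomial Set

theorem Continuous.eq_of_countable_range {X Y : Type*} [TopologicalSpace X] [PreconnectedSpace X]
    [TopologicalSpace Y] [T35Space Y] {f : X → Y} (hf : Continuous f) (hc : (range f).Countable)
    (x y : X) : f x = f y := by
  have : TotallySeparatedSpace (range f) := hc.totallySeparatedSpace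
  exact (totallyDisconnectedSpace_subtype_iff.mp inferInstance) _ Subset.rfl
    (isPreconnected_range hf) (mem_range_self x) (mem_range_self y)

theorem Matrix.continuous_charpoly_coeff {n R : Type*} [Fintype n] [DecidableEq n] [CommRing R]
    [TopologicalSpace R] [IsTopologicalRing R] (i : ℕ) :
    Continuous fun M : Matrix n n R => M.charpoly.coeff i := by
  have h (M : Matrix n n R) : M.charpoly.coeff i =
      MvPolynomial.eval (fun p : n × n => M p.1 p.2) ((charpoly.univ R n).coeff i) :=
    (charpoly.univ_coeff_eval₂Hom n (RingHom.id R) (fun p : n × n => M p.1 p.2) i).symm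
  simp_rw [h]
  exact (MvPolynomial.continuous_eval _).comp (continuous_pi fun p => continuous_apply_apply _ _)

theorem Polynomial.countable_setOf_monic_roots_subset {K : Type*} [Field K] [IsAlgClosed K]
    {U : Set K} (hU : U.Countable) :
    {p : K[X] | p.Monic ∧ ∀ a, p.IsRoot a → a ∈ U}.Countable := by
  have : Countable U := hU.to_subtype
  refine (countable_range fun s : Multiset U =>
    (Multiset.map (fun a : U => X - C (a : K)) s).prod).mono ?_
  rintro p ⟨hmonic, hroots⟩
  lift p.roots to Multiset U using fun a ha => hroots a (isRoot_of_mem_roots ha) with s hs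
  refine ⟨s, ?_⟩
  rw [(IsAlgClosed.splits p).eq_prod_roots_of_monic hmonic, ← hs, Multiset.map_map]
  rfl

theorem countable_setOf_pow_eq_one {K : Type*} [CommRing K] [IsDomain K] :
    {z : K | ∃ k, 1 ≤ k ∧ z ^ k = 1}.Countable := by
  refine (countable_iUnion fun k : ℕ => (nthRootsFinset k (1 : K)).countable_toSet).mono ?_
  rintro z ⟨k, hk, hz⟩
  exact mem_iUnion.mpr ⟨k, by simpa [mem_nthRootsFinset hk] using hz⟩

theorem Matrix.charpoly_eq_of_continuous {X : Type*} [TopologicalSpace X] [PreconnectedSpace X]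
    {K : Type*} [Field K] [IsAlgClosed K] [TopologicalSpace K] [IsTopologicalRing K] [T35Space K]
    {n : Type*} [Fintype n] [DecidableEq n] {f : X → Matrix n n K} (hf : Continuous f)
    {U : Set K} (hU : U.Countable) (hroots : ∀ x a, (f x).charpoly.IsRoot a → a ∈ U) (x y : X) :
    (f x).charpoly = (f y).charpoly := by
  let coeffs : K[X] → ℕ → K := fun p i => p.coeff i
  have hcont : Continuous fun x => coeffs (f x).charpoly :=
    continuous_pi fun i => (continuous_charpoly_coeff i).comp hf
  have hrange : (range fun x => coeffs (f x).charpoly).Countable := by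
    refine ((countable_setOf_monic_roots_subset hU).image coeffs).mono ?_
    rintro _ ⟨x, rfl⟩
    exact ⟨_, ⟨charpoly_monic _, hroots x⟩, rfl⟩
  exact Polynomial.ext (congrFun (hcont.eq_of_countable_range hrange x y))

theorem Matrix.charpoly_eq_X_sub_one_pow_iff {n K : Type*} [Fintype n] [DecidableEq n] [CommRing K]
    [IsDomain K] (M : Matrix n n K) :
    M.charpoly = (X - 1) ^ Fintype.card n ↔ (M - 1) ^ Fintype.card n = 0 := by
  constructor
  · intro h
    simpa [h] using aeval_self_charpoly M
  · intro h
    have hN : (M - scalar n 1).charpoly = X ^ Fintype.card n := by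
      have := (isNilpotent_charpoly_sub_pow_of_isNilpotent (M := M - 1) ⟨_, h⟩).eq_zero
      simpa [sub_eq_zero] using this
    rw [charpoly_sub_scalar] at hN
    have := congrArg (·.comp (X - C 1)) hN
    simpa [comp_assoc] using this

/-- Let `A : [0,1] → GL_m(ℂ)` be a continuous path such that every eigenvalue of every
`A t` is a root of unity, and such that `A 0` is unipotent, i.e. `(A 0 - 1)^m = 0`.
Then `A t` is unipotent for every `t`; in particular `A 1` is unipotent. -/
theorem stmt8 {m : ℕ} (A : Set.Icc (0 : ℝ) 1 → Matrix.GeneralLinearGroup (Fin m) ℂ)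
    (hcont : Continuous A)
    (hroots : ∀ t : Set.Icc (0 : ℝ) 1, ∀ lam : ℂ,
      (Matrix.charpoly (↑(A t) : Matrix (Fin m) (Fin m) ℂ)).IsRoot lam →
      ∃ k : ℕ, 1 ≤ k ∧ lam ^ k = 1)
    (h0 : ((↑(A ⟨0, by norm_num⟩) : Matrix (Fin m) (Fin m) ℂ) - 1) ^ m = 0) :
    ∀ t : Set.Icc (0 : ℝ) 1, ((↑(A t) : Matrix (Fin m) (Fin m) ℂ) - 1) ^ m = 0 := by
  intro t
  have hconst := Matrix.charpoly_eq_of_continuous (f := fun t => (A t : Matrix (Fin m) (Fin m) ℂ))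
    (Units.continuous_val.comp hcont) countable_setOf_pow_eq_one hroots t ⟨0, by norm_num⟩
  have hcharpoly0 := (Matrix.charpoly_eq_X_sub_one_pow_iff (A ⟨0, by norm_num⟩ : Matrix _ _ ℂ)).mpr
    (by rwa [Fintype.card_fin])
  simpa using (Matrix.charpoly_eq_X_sub_one_pow_iff _).mp (hconst.trans hcharpoly0)
end

section
/- Let H be a subgroup of GL_m(ℂ) which is nilpotent as an abstract group and which is generated by a set of unipotent matrices. Then every element h of H is unipotent, i.e., (h − 1)^m = 0. -/
/-!
Induct on the dimension of the representation. A proper nonzero invariant subspace splits the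
problem into a subrepresentation and a quotient, and unipotence on both gives unipotence on the
whole space. In the irreducible case, every element of the upper central series acts centrally,
by induction along the series: if `⁅x, s⁆` acts centrally then by Schur's lemma it is a scalar
`μ`, so `ρ (x * s * x⁻¹) = μ • ρ s`. For a unipotent generator `s` both sides are unipotent,
and comparing traces gives `μ = 1`. So `G` acts by scalars, and a unipotent scalar is `1`.
-/

open Module
open scoped commutatorElement

namespace Module.End

variable {R M : Type*} [Ring R] [AddCommGroup M] [Module R M] {f : End R M} {p : Submodule R M}

theorem isNilpotent_of_isNilpotent_restrict_of_isNilpotent_mapQ (hp : p ≤ p.comap f)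
    (h₁ : IsNilpotent (f.restrict hp)) (h₂ : IsNilpotent (p.mapQ p f hp)) : IsNilpotent f := by
  obtain ⟨a, ha⟩ := h₂
  obtain ⟨b, hb⟩ := h₁
  refine ⟨b + a, LinearMap.ext fun v => ?_⟩
  have hv : (f ^ a) v ∈ p := by
    have h := congr($ha (Submodule.Quotient.mk v))
    rwa [← Submodule.mapQ_pow, Submodule.mapQ_apply, LinearMap.zero_apply,
      Submodule.Quotient.mk_eq_zero] at h
  have h := congr(($hb ⟨_, hv⟩ : M))
  rw [pow_restrict, LinearMap.restrict_apply] at h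
  simpa [pow_add, mul_apply] using h

theorem le_comap_sub_one (hp : p ≤ p.comap f) : p ≤ p.comap (f - 1) :=
  fun _ hv => p.sub_mem (hp hv) hv

theorem restrict_sub_one (hp : p ≤ p.comap f) :
    f.restrict hp - 1 = (f - 1).restrict (le_comap_sub_one hp) := by
  ext; simp

theorem mapQ_sub_one (hp : p ≤ p.comap f) :
    p.mapQ p f hp - 1 = p.mapQ p (f - 1) (le_comap_sub_one hp) := by
  ext; simp

theorem isNilpotent_restrict_sub_one (hp : p ≤ p.comap f) (hf : IsNilpotent (f - 1)) :
    IsNilpotent (f.restrict hp - 1) :=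
  restrict_sub_one hp ▸ isNilpotent.restrict _ hf

theorem isNilpotent_mapQ_sub_one (hp : p ≤ p.comap f) (hf : IsNilpotent (f - 1)) :
    IsNilpotent (p.mapQ p f hp - 1) :=
  mapQ_sub_one hp ▸ IsNilpotent.mapQ _ hf

theorem isNilpotent_sub_one_of_restrict_of_mapQ (hp : p ≤ p.comap f)
    (h₁ : IsNilpotent (f.restrict hp - 1)) (h₂ : IsNilpotent (p.mapQ p f hp - 1)) :
    IsNilpotent (f - 1) :=
  isNilpotent_of_isNilpotent_restrict_of_isNilpotent_mapQ (le_comap_sub_one hp)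
    (restrict_sub_one hp ▸ h₁) (mapQ_sub_one hp ▸ h₂)

end Module.End

section Trace

variable {K V : Type*} [Field K] [AddCommGroup V] [Module K V] [FiniteDimensional K V]

theorem LinearMap.trace_eq_finrank_of_isNilpotent_sub_one {f : End K V}
    (hf : IsNilpotent (f - 1)) : LinearMap.trace K V f = finrank K V := by
  have h := (LinearMap.isNilpotent_trace_of_isNilpotent hf).eq_zero
  rwa [map_sub, LinearMap.trace_one, sub_eq_zero] at h

theorem Module.End.eq_one_of_isNilpotent_smul_sub_one [CharZero K] [Nontrivial V]
    {f : End K V} {μ : K} (hf : IsNilpotent (f - 1)) (hμf : IsNilpotent (μ • f - 1)) :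
    μ = 1 := by
  have h := LinearMap.trace_eq_finrank_of_isNilpotent_sub_one hμf
  rw [map_smul, LinearMap.trace_eq_finrank_of_isNilpotent_sub_one hf, smul_eq_mul] at h
  exact (mul_eq_right₀ (Nat.cast_ne_zero.mpr finrank_pos.ne')).mp h

end Trace

theorem Matrix.pow_card_eq_zero_of_isNilpotent {R n : Type*} [CommRing R] [IsDomain R]
    [Fintype n] [DecidableEq n] {A : Matrix n n R} (hA : IsNilpotent A) :
    A ^ Fintype.card n = 0 := by
  have hchar := sub_eq_zero.mp (Matrix.isNilpotent_charpoly_sub_pow_of_isNilpotent hA).eq_zero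
  simpa [hchar] using A.aeval_self_charpoly

namespace Representation

theorem exists_eq_smul_one_of_forall_commute {K G V : Type*} [Field K] [IsAlgClosed K] [Monoid G]
    [AddCommGroup V] [Module K V] [FiniteDimensional K V] [Nontrivial V]
    (ρ : Representation K G V) (hirr : ∀ p ∈ ρ.invtSubmodule, p = ⊥ ∨ p = ⊤) {f : End K V}
    (hf : ∀ g, Commute f (ρ g)) : ∃ μ : K, f = μ • 1 := by
  obtain ⟨μ, hμ⟩ := Module.End.exists_eigenvalue f
  have hinv : f.eigenspace μ ∈ ρ.invtSubmodule :=
    ρ.mem_invtSubmodule.mpr fun g => Module.End.mapsTo_genEigenspace_of_comm (hf g) μ 1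
  have htop := (hirr _ hinv).resolve_left hμ
  refine ⟨μ, LinearMap.ext fun v => ?_⟩
  have hv : v ∈ f.eigenspace μ := htop ▸ Submodule.mem_top
  simpa using Module.End.mem_eigenspace_iff.mp hv

theorem commute_of_closure_eq_top {K G V : Type*} [CommSemiring K] [Group G] [AddCommMonoid V]
    [Module K V] (ρ : Representation K G V) {S : Set G} (hS : Subgroup.closure S = ⊤)
    {f : End K V} (hf : ∀ s ∈ S, Commute f (ρ s)) (g : G) : Commute f (ρ g) := by
  refine Subgroup.closure_induction (p := fun g _ => Commute f (ρ g)) hf (by simp)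
    (fun x y _ _ hx hy => by simpa using hx.mul_right hy) (fun x _ hx => ?_)
    (hS ▸ Subgroup.mem_top g)
  have h := (show Commute f (ρ.asGroupHom x) from hx).units_inv_right
  rwa [← map_inv, asGroupHom_apply] at h

theorem isNilpotent_apply_conj_sub_one {K G V : Type*} [CommRing K] [Group G] [AddCommGroup V]
    [Module K V] (ρ : Representation K G V) {s : G} (hs : IsNilpotent (ρ s - 1)) (x : G) :
    IsNilpotent (ρ (x * s * x⁻¹) - 1) := by
  obtain ⟨k, hk⟩ := hs
  have hinv : ↑(ρ.asGroupHom x)⁻¹ = ρ x⁻¹ := by rw [← map_inv, asGroupHom_apply]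
  have hconj : ρ (x * s * x⁻¹) - 1 = ρ.asGroupHom x * (ρ s - 1) * ↑(ρ.asGroupHom x)⁻¹ := by
    simp [hinv, asGroupHom_apply, mul_sub, sub_mul, ← map_mul]
  exact ⟨k, by rw [hconj, Units.conj_pow, hk, mul_zero, zero_mul]⟩

variable {K G V : Type*} [Field K] [IsAlgClosed K] [CharZero K] [Group G] [AddCommGroup V]
  [Module K V] [FiniteDimensional K V] (ρ : Representation K G V)

theorem commute_of_mem_upperCentralSeries [Nontrivial V]
    (hirr : ∀ p ∈ ρ.invtSubmodule, p = ⊥ ∨ p = ⊤) {S : Set G} (hS : Subgroup.closure S = ⊤)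
    (hρS : ∀ s ∈ S, IsNilpotent (ρ s - 1)) (n : ℕ) {x : G}
    (hx : x ∈ Subgroup.upperCentralSeries G n) (g : G) : Commute (ρ x) (ρ g) := by
  induction n generalizing x g with
  | zero =>
    rw [Subgroup.upperCentralSeries_zero, Subgroup.mem_bot] at hx
    simp [hx]
  | succ n ih =>
    refine ρ.commute_of_closure_eq_top hS (fun s hs => ?_) g
    obtain ⟨μ, hμ⟩ := ρ.exists_eq_smul_one_of_forall_commute hirr
      (ih (Subgroup.mem_upperCentralSeries_succ_iff.mp hx s))
    have hconj : ρ (x * s * x⁻¹) = μ • ρ s := by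
      rw [show x * s * x⁻¹ = ⁅x, s⁆ * s by group, map_mul, hμ, smul_mul_assoc, one_mul]
    have hμ1 : μ = 1 := Module.End.eq_one_of_isNilpotent_smul_sub_one (hρS s hs)
      (hconj ▸ ρ.isNilpotent_apply_conj_sub_one (hρS s hs) x)
    calc ρ x * ρ s = ρ (x * s * x⁻¹) * ρ x := by rw [← map_mul, ← map_mul, inv_mul_cancel_right]
      _ = ρ s * ρ x := by rw [hconj, hμ1, one_smul]

theorem apply_eq_one_of_invtSubmodule_eq_bot_or_top [Nontrivial V] [Group.IsNilpotent G]
    (hirr : ∀ p ∈ ρ.invtSubmodule, p = ⊥ ∨ p = ⊤) {S : Set G} (hS : Subgroup.closure S = ⊤)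
    (hρS : ∀ s ∈ S, IsNilpotent (ρ s - 1)) (g : G) : ρ g = 1 := by
  have hS1 : ∀ s ∈ S, ρ s = 1 := by
    intro s hs
    have hs_top : s ∈ Subgroup.upperCentralSeries G (Group.nilpotencyClass G) :=
      Subgroup.upperCentralSeries_nilpotencyClass (G := G) ▸ Subgroup.mem_top s
    obtain ⟨μ, hμ⟩ := ρ.exists_eq_smul_one_of_forall_commute hirr
      (ρ.commute_of_mem_upperCentralSeries hirr hS hρS _ hs_top)
    have hμ1 : μ = 1 := Module.End.eq_one_of_isNilpotent_smul_sub_one (by simp) (hμ ▸ hρS s hs)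
    rw [hμ, hμ1, one_smul]
  have hker : Subgroup.closure S ≤ ρ.asGroupHom.ker :=
    (Subgroup.closure_le _).mpr fun s hs => by simp [Units.ext_iff, asGroupHom_apply, hS1 s hs]
  simpa [Units.ext_iff, asGroupHom_apply] using hker (hS ▸ Subgroup.mem_top g)

theorem isNilpotent_sub_one_of_closure_eq_top [Group.IsNilpotent G] {S : Set G}
    (hS : Subgroup.closure S = ⊤) (hρS : ∀ s ∈ S, IsNilpotent (ρ s - 1)) (g : G) :
    IsNilpotent (ρ g - 1) := by
  induction hn : finrank K V using Nat.strong_induction_on generalizing V with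
  | _ n ih =>
  rcases subsingleton_or_nontrivial V with hV | hV
  · exact ⟨1, Subsingleton.elim _ _⟩
  by_cases hirr : ∀ p ∈ ρ.invtSubmodule, p = ⊥ ∨ p = ⊤
  · rw [ρ.apply_eq_one_of_invtSubmodule_eq_bot_or_top hirr hS hρS g, sub_self]
    exact IsNilpotent.zero
  push Not at hirr
  obtain ⟨p, hp, hp_bot, hp_top⟩ := hirr
  have hinv : ∀ g, p ≤ p.comap (ρ g) := ρ.mem_invtSubmodule.mp hp
  have hp_pos : 0 < finrank K p := Nat.pos_of_ne_zero (Submodule.finrank_eq_zero.not.mpr hp_bot)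
  have hp_lt : finrank K p < n := hn ▸ Submodule.finrank_lt hp_top
  have hquot_lt : finrank K (V ⧸ p) < n := by
    have := p.finrank_quotient_add_finrank
    omega
  exact Module.End.isNilpotent_sub_one_of_restrict_of_mapQ (hinv g)
    (ih _ hp_lt (ρ.subrepresentation p hinv)
      (fun s hs => Module.End.isNilpotent_restrict_sub_one (hinv s) (hρS s hs)) rfl)
    (ih _ hquot_lt (ρ.quotient p hinv)
      (fun s hs => Module.End.isNilpotent_mapQ_sub_one (hinv s) (hρS s hs)) rfl)

end Representation

/-- Let `H` be a subgroup of `GL_m(ℂ)` which is nilpotent as an abstract group and which is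
generated by a set `T` of unipotent matrices. Then every element of `H` is unipotent,
i.e. `(h - 1)^m = 0`. -/
theorem stmt9 {m : ℕ} (H : Subgroup (Matrix.GeneralLinearGroup (Fin m) ℂ))
    (hnil : Group.IsNilpotent ↥H)
    (T : Set (Matrix.GeneralLinearGroup (Fin m) ℂ))
    (hTgen : Subgroup.closure T = H)
    (hTuni : ∀ x ∈ T, ((↑x : Matrix (Fin m) (Fin m) ℂ) - 1) ^ m = 0) :
    ∀ h ∈ H, ((↑h : Matrix (Fin m) (Fin m) ℂ) - 1) ^ m = 0 := by
  subst hTgen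
  intro h hh
  let ρ : Representation ℂ (Subgroup.closure T) (Fin m → ℂ) :=
    Matrix.toLinAlgEquiv'.toMonoidHom.comp ((Units.coeHom _).comp (Subgroup.closure T).subtype)
  have hρ : ∀ g, IsNilpotent (ρ g - 1) ↔
      IsNilpotent (((g : Matrix.GeneralLinearGroup (Fin m) ℂ) : Matrix (Fin m) (Fin m) ℂ) - 1) :=
    fun g => by
      rw [← IsNilpotent.map_iff Matrix.toLinAlgEquiv'.injective, map_sub, map_one]
      rfl
  have hunip := ρ.isNilpotent_sub_one_of_closure_eq_top Subgroup.closure_closure_coe_preimage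
    (fun s hs => (hρ s).mpr ⟨m, hTuni _ hs⟩) ⟨h, hh⟩
  simpa using Matrix.pow_card_eq_zero_of_isNilpotent ((hρ _).mp hunip)
end

section
/- Let H and G be topological groups and let π : H → G be a continuous surjective group homomorphism which is a covering map. Let Γ be a group and for each t ∈ [0,1] let ρ_t : Γ → G be a group homomorphism such that for every γ ∈ Γ the map t ↦ ρ_t(γ) is continuous. Suppose ρ̃₀ : Γ → H is a group homomorphism with π ∘ ρ̃₀ = ρ₀. Then there exists a family of group homomorphisms ρ̃_t : Γ → H, t ∈ [0,1], such that π ∘ ρ̃_t = ρ_t for all t, the map t ↦ ρ̃_t(γ) is continuous for every γ ∈ Γ, and ρ̃_t agrees at t = 0 with the given lift ρ̃₀. In particular, every homomorphism ρ : Γ → G joined to ρ₀ by such a path lifts to a homomorphism ρ̃ : Γ → H with π ∘ ρ̃ = ρ. -/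
/-!
Lift each path `t ↦ ρ_t γ` through the covering starting at `ρ̃₀ γ`. For `γ, δ ∈ Γ` the lift of
`γδ` and the pointwise product of the lifts of `γ` and `δ` lie over the same path and start at the
same point, so they coincide by uniqueness of lifts.
-/

open unitInterval

theorem IsCoveringMap.lift_map_mul {X Γ H G F F' : Type*} [TopologicalSpace X]
    [PreconnectedSpace X] [Mul Γ] [Mul H] [TopologicalSpace H] [ContinuousMul H] [Mul G]
    [TopologicalSpace G] [FunLike F H G] [MulHomClass F H G] [FunLike F' Γ G]
    [MulHomClass F' Γ G] {π : F} (hπ : IsCoveringMap π) {ρ : X → F'} {L : Γ → X → H}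
    (hL : ∀ γ, Continuous (L γ)) (hlift : ∀ γ x, π (L γ x) = ρ x γ) {x₀ : X}
    (h₀ : ∀ γ δ, L (γ * δ) x₀ = L γ x₀ * L δ x₀) (γ δ : Γ) (x : X) :
    L (γ * δ) x = L γ x * L δ x := by
  refine congrFun (hπ.eq_of_comp_eq (hL _) ((hL γ).mul (hL δ)) ?_ x₀ (h₀ γ δ)) x
  funext y
  simp only [Function.comp_apply, Pi.mul_apply, map_mul, hlift]

/-- Let `π : H → G` be a continuous surjective group homomorphism between topological groups
which is a covering map, and let `ρ_t : Γ → G`, `t ∈ [0,1]`, be a family of homomorphisms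
of a group `Γ` such that `t ↦ ρ_t γ` is continuous for each `γ`. Given a homomorphic lift
`ρ̃₀ : Γ → H` of `ρ₀`, there is a family of homomorphisms `ρ̃_t : Γ → H` lifting `ρ_t`
(`π ∘ ρ̃_t = ρ_t`), pointwise continuous in `t`, and agreeing with `ρ̃₀` at `t = 0`.
In particular every `ρ_t` (e.g. `ρ_1`) lifts to a homomorphism `Γ → H`. -/
theorem stmt10 {H G : Type*} [Group H] [TopologicalSpace H] [IsTopologicalGroup H]
    [Group G] [TopologicalSpace G]
    (π : H →* G)
    (hcov : IsCoveringMap (⇑π))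
    {Γ : Type*} [Group Γ]
    (ρ : Set.Icc (0 : ℝ) 1 → (Γ →* G))
    (hρ : ∀ γ : Γ, Continuous fun t => ρ t γ)
    (ρ₀ : Γ →* H) (h0 : π.comp ρ₀ = ρ ⟨0, by norm_num⟩) :
    ∃ ρlift : Set.Icc (0 : ℝ) 1 → (Γ →* H),
      (∀ t, π.comp (ρlift t) = ρ t) ∧
      (∀ γ : Γ, Continuous fun t => ρlift t γ) ∧
      ρlift ⟨0, by norm_num⟩ = ρ₀ := by
  have path_lifts (γ : Γ) : ∃ L : C(I, H), π ∘ L = (ρ · γ) ∧ L 0 = ρ₀ γ :=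
    hcov.exists_path_lifts ⟨(ρ · γ), hρ γ⟩ (ρ₀ γ) (DFunLike.congr_fun h0 γ).symm
  choose L hLπ hL0 using path_lifts
  have hmul := hcov.lift_map_mul (ρ := ρ) (L := fun γ => L γ) (fun γ => (L γ).continuous)
    (fun γ => congrFun (hLπ γ)) (x₀ := 0) (fun γ δ => by simp only [hL0, map_mul])
  refine ⟨fun t => MonoidHom.mk' (L · t) fun γ δ => hmul γ δ t, fun t => ?_,
    fun γ => (L γ).continuous, ?_⟩
  · ext γ
    exact congrFun (hLπ γ) t
  · ext γ
    exact hL0 γ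
end
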